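/- arXiv:2206.12757 — 2 statements merged into one kernel-verified Lean document; each statement's English description precedes it below -/
import Mathlib

section
/- Let n ≥ 2 be an integer and b a real number. For the Randers choice φ(s) = 1 + s, with T(s) = φ(s)·(φ(s) − s·φ′(s))^(n−2)·((φ(s) − s·φ′(s)) + (b² − s²)·φ″(s)), one has ∫₀^π T(b·cos t)·(sin t)^(n−2) dt = ∫₀^π (sin t)^(n−2) dt; hence the Holmes–Thompson volume form of the Randers metric F = α + β coincides with the Riemannian volume form of α. -/
/-!
For `φ(s) = 1 + s` one has `φ - s φ' = 1` and `φ'' = 0`, so the Holmes–Thompson density is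
`T(s) = 1 + s`. The integrand is therefore `(1 + b cos t) sin^(n-2) t`, and the term
`b cos t sin^(n-2) t` integrates to zero over `[0, π]` because it is the derivative of a
multiple of `sin^(n-1) t`, which vanishes at both ends.
-/

open Real intervalIntegral

noncomputable def holmesThompsonDensity (n : ℕ) (b : ℝ) (φ : ℝ → ℝ) (s : ℝ) : ℝ :=
  φ s * (φ s - s * deriv φ s) ^ (n - 2) *
    ((φ s - s * deriv φ s) + (b ^ 2 - s ^ 2) * deriv (deriv φ) s)

theorem holmesThompsonDensity_one_add (n : ℕ) (b s : ℝ) :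
    holmesThompsonDensity n b (fun s => 1 + s) s = 1 + s := by
  simp [holmesThompsonDensity]

theorem integral_cos_mul_sin_pow_eq_zero (m : ℕ) :
    ∫ t in (0 : ℝ)..π, cos t * sin t ^ m = 0 := by
  simpa [mul_comm] using integral_sin_pow_mul_cos_pow_odd (a := 0) (b := π) m 0

theorem integral_one_add_mul_cos_mul_sin_pow (m : ℕ) (b : ℝ) :
    ∫ t in (0 : ℝ)..π, (1 + b * cos t) * sin t ^ m = ∫ t in (0 : ℝ)..π, sin t ^ m := by
  have hsplit : (fun t => (1 + b * cos t) * sin t ^ m) =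
      fun t => sin t ^ m + b * (cos t * sin t ^ m) := by
    funext t; ring
  rw [hsplit, integral_add ((by fun_prop : Continuous _).intervalIntegrable _ _)
    ((by fun_prop : Continuous _).intervalIntegrable _ _), integral_const_mul,
    integral_cos_mul_sin_pow_eq_zero, mul_zero, add_zero]

theorem randers_holmesThompson_integral_eq_general (n : ℕ) (b : ℝ)
    (φ : ℝ → ℝ) (hφ : ∀ s, φ s = 1 + s)
    (T : ℝ → ℝ)
    (hT : ∀ s, T s = φ s * (φ s - s * deriv φ s) ^ (n - 2) *
      ((φ s - s * deriv φ s) + (b ^ 2 - s ^ 2) * deriv (deriv φ) s)) :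
    (∫ t in (0:ℝ)..π, T (b * Real.cos t) * Real.sin t ^ (n - 2)) =
      ∫ t in (0:ℝ)..π, Real.sin t ^ (n - 2) := by
  obtain rfl : φ = fun s => 1 + s := funext hφ
  have hT_one_add : ∀ s, T s = 1 + s := fun s => by
    rw [hT, ← holmesThompsonDensity_one_add n b s]; rfl
  simp only [hT_one_add]
  exact integral_one_add_mul_cos_mul_sin_pow (n - 2) b

/-- For the Randers choice `φ(s) = 1 + s`, with `T` the Holmes–Thompson density,
`∫₀^π T(b·cos t)·(sin t)^(n−2) dt = ∫₀^π (sin t)^(n−2) dt`; hence the Holmes–Thompson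
volume form of the Randers metric coincides with the Riemannian volume form of `α`. -/
theorem randers_holmesThompson_integral_eq (n : ℕ) (hn : 2 ≤ n) (b : ℝ)
    (φ : ℝ → ℝ) (hφ : ∀ s, φ s = 1 + s)
    (T : ℝ → ℝ)
    (hT : ∀ s, T s = φ s * (φ s - s * deriv φ s) ^ (n - 2) *
      ((φ s - s * deriv φ s) + (b ^ 2 - s ^ 2) * deriv (deriv φ) s)) :
    (∫ t in (0:ℝ)..π, T (b * Real.cos t) * Real.sin t ^ (n - 2)) =
      ∫ t in (0:ℝ)..π, Real.sin t ^ (n - 2) :=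
  randers_holmesThompson_integral_eq_general n b φ hφ T hT
end

section
/- Let n ≥ 2 be an integer and let b be a real number with |b| < 1. Then ∫₀^π (sin t)^(n−2) / (1 + b·cos t)^n dt = (1 − b²)^(−(n+1)/2) · ∫₀^π (sin t)^(n−2) dt; equivalently, the Busemann–Hausdorff normalization factor of the Randers metric (φ(s) = 1 + s) is f_BH(b) = (1 − b²)^((n+1)/2). -/
/-!
Substitute `cos θ = (cos s - b) / (1 - b cos s)`, an orientation-preserving reparametrisation of
`[0, π]`. Then `sin θ = √(1 - b²) sin s / (1 - b cos s)`, `1 + b cos θ = (1 - b²) / (1 - b cos s)`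
and `dθ = √(1 - b²) ds / (1 - b cos s)`, so the integrand `sin^(n-2) θ / (1 + b cos θ)^n dθ`
becomes `(1 - b²)^(-(n+1)/2) sin^(n-2) s (1 - b cos s) ds`. The term `sin^(n-2) s cos s`
integrates to zero over `[0, π]`.
-/

open Real intervalIntegral Set

lemma integral_sin_pow_mul_one_sub_mul_cos (b : ℝ) (k : ℕ) :
    ∫ t in 0..π, sin t ^ k * (1 - b * cos t) = ∫ t in 0..π, sin t ^ k := by
  have hodd : ∫ t in 0..π, sin t ^ k * cos t = 0 := by
    simpa using integral_sin_pow_mul_cos_pow_odd (a := 0) (b := π) k 0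
  have hsin : IntervalIntegrable (fun t => sin t ^ k) MeasureTheory.volume 0 π :=
    (continuous_sin.pow k).intervalIntegrable _ _
  have hcos : IntervalIntegrable (fun t => b * (sin t ^ k * cos t)) MeasureTheory.volume 0 π :=
    (continuous_const.mul ((continuous_sin.pow k).mul continuous_cos)).intervalIntegrable _ _
  simp_rw [mul_sub, mul_one, mul_left_comm _ b]
  rw [integral_sub hsin hcos, integral_const_mul, hodd, mul_zero, sub_zero]

lemma inv_sqrt_pow_eq_rpow_neg {x : ℝ} (hx : 0 ≤ x) (m : ℕ) :
    (√x ^ m)⁻¹ = x ^ (-((m : ℝ) / 2)) := by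
  rw [rpow_neg hx, sqrt_eq_rpow, ← rpow_natCast, ← rpow_mul hx, one_div_mul_eq_div]

noncomputable def randersCos (b s : ℝ) : ℝ := (cos s - b) / (1 - b * cos s)

noncomputable def randersAngle (b s : ℝ) : ℝ := arccos (randersCos b s)

section
variable {b : ℝ}

lemma one_add_mul_cos_pos (hb : |b| < 1) (s : ℝ) : 0 < 1 + b * cos s := by
  have : |b * cos s| < 1 := by
    rw [abs_mul]; exact (mul_le_of_le_one_right (abs_nonneg b) (abs_cos_le_one s)).trans_lt hb
  linarith [(abs_lt.1 this).1]

lemma one_sub_sq_pos (hb : |b| < 1) : 0 < 1 - b ^ 2 := by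
  nlinarith [abs_lt.1 hb]

lemma one_sub_mul_cos_pos (hb : |b| < 1) (s : ℝ) : 0 < 1 - b * cos s := by
  simpa using one_add_mul_cos_pos (b := -b) (by rwa [abs_neg]) s

lemma one_sub_randersCos (hb : |b| < 1) (s : ℝ) :
    1 - randersCos b s = (1 + b) * (1 - cos s) / (1 - b * cos s) := by
  have hD := (one_sub_mul_cos_pos hb s).ne'
  rw [randersCos, eq_div_iff hD, sub_mul, one_mul, div_mul_cancel₀ _ hD]
  ring

lemma one_add_randersCos (hb : |b| < 1) (s : ℝ) :
    1 + randersCos b s = (1 - b) * (1 + cos s) / (1 - b * cos s) := by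
  have hD := (one_sub_mul_cos_pos hb s).ne'
  rw [randersCos, eq_div_iff hD, add_mul, one_mul, div_mul_cancel₀ _ hD]
  ring

lemma randersCos_mem_Icc (hb : |b| < 1) (s : ℝ) : randersCos b s ∈ Icc (-1) 1 := by
  have hD := one_sub_mul_cos_pos hb s
  obtain ⟨hb₁, hb₂⟩ := abs_lt.1 hb
  have h₁ : 0 ≤ (1 - b) * (1 + cos s) / (1 - b * cos s) :=
    div_nonneg (mul_nonneg (by linarith) (by linarith [neg_one_le_cos s])) hD.le
  have h₂ : 0 ≤ (1 + b) * (1 - cos s) / (1 - b * cos s) :=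
    div_nonneg (mul_nonneg (by linarith) (by linarith [cos_le_one s])) hD.le
  rw [← one_add_randersCos hb] at h₁
  rw [← one_sub_randersCos hb] at h₂
  constructor <;> linarith

lemma randersCos_mem_Ioo (hb : |b| < 1) {s : ℝ} (hs : 0 < sin s) :
    randersCos b s ∈ Ioo (-1) 1 := by
  have hD := one_sub_mul_cos_pos hb s
  obtain ⟨hb₁, hb₂⟩ := abs_lt.1 hb
  have hcos : cos s ∈ Ioo (-1) 1 := by
    rw [mem_Ioo, ← abs_lt, ← sq_lt_one_iff_abs_lt_one]; nlinarith [sin_sq_add_cos_sq s]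
  have h₁ : 0 < (1 - b) * (1 + cos s) / (1 - b * cos s) :=
    div_pos (mul_pos (by linarith) (by linarith [hcos.1])) hD
  have h₂ : 0 < (1 + b) * (1 - cos s) / (1 - b * cos s) :=
    div_pos (mul_pos (by linarith) (by linarith [hcos.2])) hD
  rw [← one_add_randersCos hb] at h₁
  rw [← one_sub_randersCos hb] at h₂
  constructor <;> linarith

lemma one_sub_randersCos_sq (hb : |b| < 1) (s : ℝ) :
    1 - randersCos b s ^ 2 = ((1 - b ^ 2) * sin s ^ 2) / (1 - b * cos s) ^ 2 := by
  rw [show 1 - randersCos b s ^ 2 = (1 + randersCos b s) * (1 - randersCos b s) by ring,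
    one_add_randersCos hb, one_sub_randersCos hb, sin_sq]
  field_simp
  ring

lemma cos_randersAngle (hb : |b| < 1) (s : ℝ) :
    cos (randersAngle b s) = randersCos b s :=
  cos_arccos (randersCos_mem_Icc hb s).1 (randersCos_mem_Icc hb s).2

lemma sin_randersAngle (hb : |b| < 1) {s : ℝ} (hs : 0 ≤ sin s) :
    sin (randersAngle b s) = √(1 - b ^ 2) * sin s / (1 - b * cos s) := by
  rw [randersAngle, sin_arccos, one_sub_randersCos_sq hb, sqrt_div' _ (sq_nonneg _),
    sqrt_mul' _ (sq_nonneg _), sqrt_sq hs, sqrt_sq (one_sub_mul_cos_pos hb s).le]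

lemma one_add_mul_cos_randersAngle (hb : |b| < 1) (s : ℝ) :
    1 + b * cos (randersAngle b s) = (1 - b ^ 2) / (1 - b * cos s) := by
  have hD := (one_sub_mul_cos_pos hb s).ne'
  rw [cos_randersAngle hb, randersCos, eq_div_iff hD, add_mul, one_mul, mul_assoc,
    div_mul_cancel₀ _ hD]
  ring

lemma randersAngle_zero (hb : |b| < 1) : randersAngle b 0 = 0 := by
  have : 1 - b ≠ 0 := by linarith [(abs_lt.1 hb).2]
  rw [randersAngle, randersCos, cos_zero, mul_one, div_self this, arccos_one]

lemma randersAngle_pi (hb : |b| < 1) : randersAngle b π = π := by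
  have : 1 + b ≠ 0 := by linarith [(abs_lt.1 hb).1]
  rw [randersAngle, randersCos, cos_pi, mul_neg_one, sub_neg_eq_add,
    show -1 - b = -(1 + b) by ring, neg_div, div_self this, arccos_neg_one]

lemma hasDerivAt_randersCos (hb : |b| < 1) (s : ℝ) :
    HasDerivAt (randersCos b) (-(1 - b ^ 2) * sin s / (1 - b * cos s) ^ 2) s := by
  have hD := (one_sub_mul_cos_pos hb s).ne'
  refine (((hasDerivAt_cos s).sub_const b).div
    (((hasDerivAt_cos s).const_mul b).const_sub 1) hD).congr_deriv ?_
  field_simp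
  ring

lemma hasDerivAt_randersAngle (hb : |b| < 1) {s : ℝ} (hs : 0 < sin s) :
    HasDerivAt (randersAngle b) (√(1 - b ^ 2) / (1 - b * cos s)) s := by
  have hv := randersCos_mem_Ioo hb hs
  have hD := one_sub_mul_cos_pos hb s
  have hr := one_sub_sq_pos hb
  refine ((hasDerivAt_arccos hv.1.ne' hv.2.ne).comp s (hasDerivAt_randersCos hb s)).congr_deriv ?_
  rw [one_sub_randersCos_sq hb, sqrt_div' _ (sq_nonneg _), sqrt_mul' _ (sq_nonneg _),
    sqrt_sq hs.le, sqrt_sq hD.le]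
  field_simp
  rw [sq_sqrt hr.le]

lemma continuous_randersAngle (hb : |b| < 1) : Continuous (randersAngle b) :=
  continuous_arccos.comp <| (continuous_cos.sub continuous_const).div
    (continuous_const.sub (continuous_const.mul continuous_cos))
    fun s => (one_sub_mul_cos_pos hb s).ne'

lemma integrand_comp_randersAngle_mul_deriv (hb : |b| < 1) (k : ℕ) {s : ℝ} (hs : 0 ≤ sin s) :
    sin (randersAngle b s) ^ k / (1 + b * cos (randersAngle b s)) ^ (k + 2) *
        (√(1 - b ^ 2) / (1 - b * cos s)) =
      (√(1 - b ^ 2) ^ (k + 3))⁻¹ * (sin s ^ k * (1 - b * cos s)) := by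
  have hD := (one_sub_mul_cos_pos hb s).ne'
  have hr : √(1 - b ^ 2) ≠ 0 := (sqrt_pos.2 (one_sub_sq_pos hb)).ne'
  have hr2 := sq_sqrt (one_sub_sq_pos hb).le
  rw [sin_randersAngle hb hs, one_add_mul_cos_randersAngle hb]
  generalize √(1 - b ^ 2) = r at hr hr2 ⊢
  generalize 1 - b * cos s = D at hD ⊢
  rw [← hr2, div_pow, div_pow, mul_pow]
  field_simp
  ring

theorem integral_sin_pow_div_one_add_mul_cos_pow (hb : |b| < 1) (k : ℕ) :
    ∫ t in 0..π, sin t ^ k / (1 + b * cos t) ^ (k + 2) =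
      (1 - b ^ 2) ^ (-(((k + 3 : ℕ) : ℝ) / 2)) * ∫ t in 0..π, sin t ^ k := by
  have hsubst := integral_comp_mul_deriv'' (f := randersAngle b)
    (f' := fun s => √(1 - b ^ 2) / (1 - b * cos s))
    (g := fun t => sin t ^ k / (1 + b * cos t) ^ (k + 2))
    (continuous_randersAngle hb).continuousOn
    (fun s hs => by
      rw [min_eq_left pi_pos.le, max_eq_right pi_pos.le] at hs
      exact (hasDerivAt_randersAngle hb (sin_pos_of_pos_of_lt_pi hs.1 hs.2)).hasDerivWithinAt)
    (continuous_const.div (continuous_const.sub (continuous_const.mul continuous_cos))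
      fun s => (one_sub_mul_cos_pos hb s).ne').continuousOn
    ((continuous_sin.pow k).div ((continuous_const.add (continuous_const.mul continuous_cos)).pow _)
      fun t => (pow_pos (one_add_mul_cos_pos hb t) _).ne').continuousOn
  rw [randersAngle_zero hb, randersAngle_pi hb] at hsubst
  have hpointwise : EqOn (fun s => ((fun t => sin t ^ k / (1 + b * cos t) ^ (k + 2)) ∘
      randersAngle b) s * (√(1 - b ^ 2) / (1 - b * cos s)))
      (fun s => (√(1 - b ^ 2) ^ (k + 3))⁻¹ * (sin s ^ k * (1 - b * cos s))) (uIcc 0 π) := by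
    intro s hs
    rw [uIcc_of_le pi_pos.le] at hs
    exact integrand_comp_randersAngle_mul_deriv hb k (sin_nonneg_of_nonneg_of_le_pi hs.1 hs.2)
  rw [← hsubst, integral_congr hpointwise, integral_const_mul, integral_sin_pow_mul_one_sub_mul_cos,
    inv_sqrt_pow_eq_rpow_neg (one_sub_sq_pos hb).le]

end

/-- For `n ≥ 2` and `|b| < 1`,
`∫₀^π (sin t)^(n−2)/(1 + b·cos t)^n dt = (1 − b²)^(−(n+1)/2) · ∫₀^π (sin t)^(n−2) dt`;
equivalently the Busemann–Hausdorff normalization factor of the Randers metric is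
`f_BH(b) = (1 − b²)^((n+1)/2)` (real exponents). -/
theorem randers_busemannHausdorff_factor (n : ℕ) (hn : 2 ≤ n) (b : ℝ) (hb : |b| < 1) :
    (∫ t in (0:ℝ)..π, Real.sin t ^ (n - 2) / (1 + b * Real.cos t) ^ n) =
      (1 - b ^ 2) ^ (-(((n : ℝ) + 1) / 2)) * ∫ t in (0:ℝ)..π, Real.sin t ^ (n - 2) ∧
    (∫ t in (0:ℝ)..π, Real.sin t ^ (n - 2)) /
      (∫ t in (0:ℝ)..π, Real.sin t ^ (n - 2) / (1 + b * Real.cos t) ^ n) =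
      (1 - b ^ 2) ^ (((n : ℝ) + 1) / 2) := by
  obtain ⟨k, rfl⟩ : ∃ k, n = k + 2 := ⟨n - 2, by omega⟩
  have hexp : (((k + 2 : ℕ) : ℝ) + 1) / 2 = ((k + 3 : ℕ) : ℝ) / 2 := by push_cast; ring
  have hintegral := integral_sin_pow_div_one_add_mul_cos_pow hb k
  rw [Nat.add_sub_cancel, hexp]
  refine ⟨hintegral, ?_⟩
  rw [hintegral, div_mul_cancel_right₀ (integral_sin_pow_pos k).ne',
    rpow_neg (one_sub_sq_pos hb).le, inv_inv]
end
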